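/- Let C = (c_{ij})_{i,j≥0} be the infinite lower triangular matrix with c_{ij} = ((s q^{2j} t^{-1}; q)_{i-j} (s^{1/2} q^{j+1} t^{-1/2}; q)_{i-j} (-s^{1/2} q^{j+1} t^{-1/2}; q)_{i-j} (t^{-1}; q)_{i-j}) / ((s q^{2j+1}; q)_{i-j} (s^{1/2} q^{j} t^{-1/2}; q)_{i-j} (-s^{1/2} q^{j} t^{-1/2}; q)_{i-j} (q; q)_{i-j}) · t^{i-j} for i ≥ j and c_{ij} = 0 for i < j, and let D = (d_{ij}) with d_{ij} = ((s q^{i+j+1} t^{-1}; q)_{i-j} (t; q)_{i-j}) / ((s q^{i+j}; q)_{i-j} (q; q)_{i-j}) for i ≥ j and 0 otherwise. Then for all i ≥ j, Σ_{k=j}^{i} d_{ik} c_{kj} = δ_{ij}; i.e. D is the inverse of C. -/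
import Mathlib

/-- The q-shifted factorial `(a;q)_n = ∏_{k=0}^{n-1} (1 - a q^k)`. -/
def qp (q a : ℂ) (n : ℕ) : ℂ := ∏ k ∈ Finset.range n, (1 - a * q ^ k)

lemma qp_zero (q a : ℂ) : qp q a 0 = 1 := Finset.prod_range_zero _

lemma qp_succ (q a : ℂ) (n : ℕ) : qp q a (n+1) = qp q a n * (1 - a * q ^ n) :=
  Finset.prod_range_succ _ _

lemma qp_succ' (q a : ℂ) (n : ℕ) : qp q a (n+1) = (1 - a) * qp q (a*q) n := by
  rw [qp, Finset.prod_range_succ', qp, pow_zero, mul_one, mul_comm]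
  congr 1
  refine Finset.prod_congr rfl fun k _ => ?_
  rw [pow_succ']
  ring

lemma qp_factor_ne {q a : ℂ} {n : ℕ} (h : qp q a n ≠ 0) {k : ℕ} (hk : k < n) :
    1 - a * q ^ k ≠ 0 :=
  fun h0 => h (Finset.prod_eq_zero (Finset.mem_range.2 hk) h0)

lemma qp_ne_zero {q a : ℂ} {n : ℕ} (h : ∀ k < n, 1 - a * q ^ k ≠ 0) : qp q a n ≠ 0 := by
  rw [qp, Finset.prod_ne_zero_iff]
  exact fun k hk => h k (Finset.mem_range.1 hk)

lemma qp_pair (q u : ℂ) (n : ℕ) : qp q u n * qp q (-u) n = qp (q^2) (u^2) n := by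
  rw [qp, qp, qp, ← Finset.prod_mul_distrib]
  refine Finset.prod_congr rfl fun k _ => ?_
  have h : (q^2)^k = (q^k)^2 := by rw [← pow_mul, ← pow_mul, mul_comm]
  rw [h]; ring

lemma qp_one_eq_zero {q : ℂ} {n : ℕ} (hn : 1 ≤ n) : qp q 1 n = 0 :=
  Finset.prod_eq_zero (Finset.mem_range.2 hn) (by simp)

/-- The summand, after merging of the `±` pairs:  `Ff q a t n m = d_{i,j+m} c_{j+m,j}`
with `a = s q^{2j}/t`, `n = i - j`. -/
noncomputable def Ff (q a t : ℂ) (n m : ℕ) : ℂ :=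
  (qp q (a*q^(n+m+1)) (n-m) * qp q t (n-m) * qp q a m * qp q t⁻¹ m
      * (1 - a*q^(2*m)) * t^m)
  / (qp q (a*t*q^(n+m)) (n-m) * qp q q (n-m) * qp q (a*t*q) m * qp q q m * (1 - a))

/-- The telescoping certificate (from the classical proof of the terminating very-well-poised
`₆φ₅` summation):  `Ff n m = Tt n (m+1) - Tt n m` for `m < n`. -/
noncomputable def Tt (q a t : ℂ) (n m : ℕ) : ℂ :=
  -((1 - a*t*q^m) * (q^m - t*q^n) * (1 - a*q^n*q^m) * (1 - q^m)
      * qp q (a*q^(n+m+1)) (n-m) * qp q t (n-m) * qp q a m * qp q t⁻¹ m * t^m)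
  / ((1 - t) * q^m * (1 - a*t*q^n) * (1 - q^n)
      * qp q (a*t*q^(n+m)) (n-m) * qp q q (n-m) * qp q (a*t*q) m * qp q q m * (1 - a))

lemma Tt_zero (q a t : ℂ) (n : ℕ) : Tt q a t n 0 = 0 := by
  simp [Tt]

set_option maxHeartbeats 1000000 in
lemma Tt_last (q a t : ℂ) (n : ℕ) (ht1 : (1:ℂ) - t ≠ 0) (hq : q ≠ 0)
    (h2 : 1 - a*t*q^n ≠ 0) (h3 : 1 - q^n ≠ 0)
    (h4 : qp q (a*t*q) n ≠ 0) (h5 : qp q q n ≠ 0) (h6 : 1 - a ≠ 0) :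
    Tt q a t n n = - Ff q a t n n := by
  unfold Tt Ff
  simp only [Nat.sub_self, qp_zero, one_mul, mul_one]
  have hqn : q^n ≠ 0 := pow_ne_zero _ hq
  rw [neg_div, neg_inj, div_eq_div_iff
    (by repeat' apply mul_ne_zero <;> try assumption)
    (by repeat' apply mul_ne_zero <;> try assumption)]
  ring

set_option maxHeartbeats 1600000 in
/-- The corresponding rational-function identity `R(X) = R'(qX)ρ(X) - R(X)`, with
`X = q^m`, `Y = q^{n-m-1}` so that `q^n = X Y q`. -/
lemma core (a t q X Y : ℂ) (hq : q ≠ 0) (ht : t ≠ 0) (ht1 : (1:ℂ) - t ≠ 0)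
    (hX : X ≠ 0)
    (g1 : 1 - a*t*(X*X*Y*q) ≠ 0) (g2 : 1 - q*Y ≠ 0)
    (g3 : 1 - a*t*(X*Y*q) ≠ 0) (g4 : 1 - X*Y*q ≠ 0)
    (g5 : 1 - a*t*q*X ≠ 0) (g6 : 1 - q*X ≠ 0) :
    ((1 - a*(X*X*Y*q*q)) * (1 - t*Y) * (1 - a*(X*X)))
      / ((1 - a*t*(X*X*Y*q)) * (1 - q*Y))
    = -((1 - a*t*(X*q)) * (X*q - t*(X*Y*q)) * (1 - a*(X*Y*q)*(X*q)) * (1 - X*q)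
          * (1 - a*X) * (1 - t⁻¹*X) * t)
        / ((1 - t) * (X*q) * (1 - a*t*(X*Y*q)) * (1 - X*Y*q) * (1 - a*t*q*X) * (1 - q*X))
      - -((1 - a*t*X) * (X - t*(X*Y*q)) * (1 - a*(X*Y*q)*X) * (1 - X)
          * (1 - a*(X*X*Y*q*q)) * (1 - t*Y))
        / ((1 - t) * X * (1 - a*t*(X*Y*q)) * (1 - X*Y*q) * (1 - a*t*(X*X*Y*q)) * (1 - q*Y)) := by
  rw [div_sub_div _ _
      (by repeat' apply mul_ne_zero
          all_goals assumption)
      (by repeat' apply mul_ne_zero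
          all_goals assumption),
    div_eq_div_iff
      (by apply mul_ne_zero <;> assumption)
      (by repeat' apply mul_ne_zero
          all_goals assumption)]
  field_simp
  ring

set_option maxHeartbeats 2000000 in
lemma step (q a t : ℂ) (n m : ℕ) (hmn : m < n) (hq : q ≠ 0) (ht : t ≠ 0)
    (ht1 : (1:ℂ) - t ≠ 0) (ha : (1:ℂ) - a ≠ 0)
    (hA : ∀ k, 1 ≤ k → (1:ℂ) - q^k ≠ 0)
    (hB : ∀ k, 1 ≤ k → (1:ℂ) - a*t*q^k ≠ 0) :
    Ff q a t n m = Tt q a t n (m+1) - Tt q a t n m := by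
  obtain ⟨r, rfl⟩ : ∃ r, n = m + r + 1 := ⟨n - m - 1, by omega⟩
  have hCq : ∀ k, qp q q k ≠ 0 := by
    intro k; apply qp_ne_zero; intro l _
    have h := hA (l+1) (by omega)
    rw [show (1:ℂ) - q^(l+1) = 1 - q*q^l by rw [pow_succ]; ring] at h
    exact h
  have hC : ∀ k, qp q (a*t*q) k ≠ 0 := by
    intro k; apply qp_ne_zero; intro l _
    have h := hB (l+1) (by omega)
    rw [show (1:ℂ) - a*t*q^(l+1) = 1 - a*t*q*q^l by rw [pow_succ]; ring] at h
    exact h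
  have f1 : (1:ℂ) - a*t*q^(m+r+1+m) ≠ 0 := hB _ (by omega)
  have f2 : (1:ℂ) - q*q^r ≠ 0 := by
    have h := hA (r+1) (by omega)
    rw [show (1:ℂ) - q^(r+1) = 1 - q*q^r by rw [pow_succ]; ring] at h
    exact h
  have f3 : qp q (a*t*q^(m+r+1+m)*q) r ≠ 0 := by
    apply qp_ne_zero; intro l _
    have h := hB (m+r+1+m+1+l) (by omega)
    rw [show (1:ℂ) - a*t*q^(m+r+1+m+1+l) = 1 - a*t*q^(m+r+1+m)*q*q^l by
      rw [pow_add, pow_succ]; ring] at h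
    exact h
  have f4 : qp q q r ≠ 0 := hCq r
  have f5 : qp q (a*t*q) m ≠ 0 := hC m
  have f6 : qp q q m ≠ 0 := hCq m
  have f9 : (1:ℂ) - a*t*q^(m+r+1) ≠ 0 := hB _ (by omega)
  have f10 : (1:ℂ) - q^(m+r+1) ≠ 0 := hA _ (by omega)
  have f11 : (1:ℂ) - a*t*q*q^m ≠ 0 := by
    have h := hB (m+1) (by omega)
    rw [show (1:ℂ) - a*t*q^(m+1) = 1 - a*t*q*q^m by rw [pow_succ]; ring] at h
    exact h
  have f12 : (1:ℂ) - q*q^m ≠ 0 := by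
    have h := hA (m+1) (by omega)
    rw [show (1:ℂ) - q^(m+1) = 1 - q*q^m by rw [pow_succ]; ring] at h
    exact h
  have hqm : q^m ≠ 0 := pow_ne_zero _ hq
  have hqm1 : q^(m+1) ≠ 0 := pow_ne_zero _ hq
  have g1' : (1:ℂ) - a*t*(q^m*q^m*q^r*q) ≠ 0 := by
    rw [show (1:ℂ) - a*t*(q^m*q^m*q^r*q) = 1 - a*t*q^(m+r+1+m) by
      rw [pow_add, pow_add, pow_add, pow_one]; try ring]
    exact f1
  have g3' : (1:ℂ) - a*t*(q^m*q^r*q) ≠ 0 := by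
    rw [show (1:ℂ) - a*t*(q^m*q^r*q) = 1 - a*t*q^(m+r+1) by
      rw [pow_add, pow_add, pow_one]; try ring]
    exact f9
  have g4' : (1:ℂ) - q^m*q^r*q ≠ 0 := by
    rw [show (1:ℂ) - q^m*q^r*q = 1 - q^(m+r+1) by
      rw [pow_add, pow_add, pow_one]; try ring]
    exact f10
  have hcore := core a t q (q^m) (q^r) hq ht ht1 hqm g1' f2 g3' g4' f11 f12
  unfold Ff Tt
  rw [show m+r+1 - m = r+1 by omega, show m+r+1 - (m+1) = r by omega]
  rw [show (a * q^(m+r+1+(m+1)+1) : ℂ) = a*q^(m+r+1+m+1)*q by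
    rw [show m+r+1+(m+1)+1 = m+r+1+m+1+1 by omega, pow_succ]; ring]
  rw [show (a*t*q^(m+r+1+(m+1)) : ℂ) = a*t*q^(m+r+1+m)*q by
    rw [show m+r+1+(m+1) = m+r+1+m+1 by omega, pow_succ]; ring]
  rw [qp_succ' q (a*q^(m+r+1+m+1)) r, qp_succ' q (a*t*q^(m+r+1+m)) r]
  rw [qp_succ q t r, qp_succ q q r, qp_succ q a m, qp_succ q t⁻¹ m,
    qp_succ q (a*t*q) m, qp_succ q q m]
  trans ((-((1 - a*t*(q^m*q)) * (q^m*q - t*(q^m*q^r*q)) * (1 - a*(q^m*q^r*q)*(q^m*q)) * (1 - q^m*q)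
          * (1 - a*q^m) * (1 - t⁻¹*q^m) * t)
        / ((1 - t) * (q^m*q) * (1 - a*t*(q^m*q^r*q)) * (1 - q^m*q^r*q) * (1 - a*t*q*q^m) * (1 - q*q^m))
      - -((1 - a*t*q^m) * (q^m - t*(q^m*q^r*q)) * (1 - a*(q^m*q^r*q)*q^m) * (1 - q^m)
          * (1 - a*(q^m*q^m*q^r*q*q)) * (1 - t*q^r))
        / ((1 - t) * q^m * (1 - a*t*(q^m*q^r*q)) * (1 - q^m*q^r*q) * (1 - a*t*(q^m*q^m*q^r*q)) * (1 - q*q^r)))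
      * ((qp q (a*q^(m+r+1+m+1)*q) r * qp q t r * qp q a m * qp q t⁻¹ m * t^m) /
           (qp q (a*t*q^(m+r+1+m)*q) r * qp q q r * qp q (a*t*q) m * qp q q m * (1-a))))
  · rw [← hcore]
    rw [div_mul_div_comm, div_eq_div_iff
      (by repeat' apply mul_ne_zero
          all_goals assumption)
      (by repeat' apply mul_ne_zero
          all_goals assumption)]
    ring
  · rw [sub_mul]
    congr 1
    · rw [div_mul_div_comm, div_eq_div_iff
        (by repeat' apply mul_ne_zero
            all_goals assumption)
        (by repeat' apply mul_ne_zero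
            all_goals assumption)]
      ring
    · rw [div_mul_div_comm, div_eq_div_iff
        (by repeat' apply mul_ne_zero
            all_goals assumption)
        (by repeat' apply mul_ne_zero
            all_goals assumption)]
      ring

lemma sum_Ff (q a t : ℂ) (n : ℕ) (hn : 1 ≤ n) (hq : q ≠ 0) (ht : t ≠ 0)
    (ht1 : (1:ℂ) - t ≠ 0) (ha : (1:ℂ) - a ≠ 0)
    (hA : ∀ k, 1 ≤ k → (1:ℂ) - q^k ≠ 0)
    (hB : ∀ k, 1 ≤ k → (1:ℂ) - a*t*q^k ≠ 0) :
    ∑ m ∈ Finset.range (n+1), Ff q a t n m = 0 := by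
  have hCq : ∀ k, qp q q k ≠ 0 := by
    intro k; apply qp_ne_zero; intro l _
    have h := hA (l+1) (by omega)
    rw [show (1:ℂ) - q^(l+1) = 1 - q*q^l by rw [pow_succ]; ring] at h
    exact h
  have hC : ∀ k, qp q (a*t*q) k ≠ 0 := by
    intro k; apply qp_ne_zero; intro l _
    have h := hB (l+1) (by omega)
    rw [show (1:ℂ) - a*t*q^(l+1) = 1 - a*t*q*q^l by rw [pow_succ]; ring] at h
    exact h
  rw [Finset.sum_range_succ]
  have tel : ∑ m ∈ Finset.range n, Ff q a t n m = Tt q a t n n - Tt q a t n 0 := by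
    rw [← Finset.sum_range_sub (Tt q a t n)]
    exact Finset.sum_congr rfl fun m hm =>
      step q a t n m (Finset.mem_range.1 hm) hq ht ht1 ha hA hB
  rw [tel, Tt_zero, Tt_last q a t n ht1 hq (hB n hn) (hA n hn) (hC n) (hCq n) ha]
  ring

/-- The matrix `D` with the explicitly factorized entries is the inverse of the
matrix `C` of eigenfunction coefficients: `Σ_{k=j}^i d_{ik} c_{kj} = δ_{ij}`. -/
theorem stmt2 (q t s rs rt : ℂ) (hrs : rs ^ 2 = s) (hrt : rt ^ 2 = t)
    (hq : q ≠ 0) (ht : t ≠ 0) (hs : s ≠ 0)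
    (c d : ℕ → ℕ → ℂ)
    (hc : ∀ i j, j ≤ i →
      c i j = (qp q (s * q ^ (2 * j) * t⁻¹) (i - j)
                * qp q (rs * q ^ (j + 1) * rt⁻¹) (i - j)
                * qp q (-(rs * q ^ (j + 1) * rt⁻¹)) (i - j)
                * qp q t⁻¹ (i - j))
              / (qp q (s * q ^ (2 * j + 1)) (i - j)
                * qp q (rs * q ^ j * rt⁻¹) (i - j)
                * qp q (-(rs * q ^ j * rt⁻¹)) (i - j)
                * qp q q (i - j))
              * t ^ (i - j))
    (hc0 : ∀ i j, i < j → c i j = 0)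
    (hd : ∀ i j, j ≤ i →
      d i j = (qp q (s * q ^ (i + j + 1) * t⁻¹) (i - j) * qp q t (i - j))
              / (qp q (s * q ^ (i + j)) (i - j) * qp q q (i - j)))
    (hd0 : ∀ i j, i < j → d i j = 0)
    (hden : ∀ i j, j ≤ i →
      qp q (s * q ^ (2 * j + 1)) (i - j) * qp q (rs * q ^ j * rt⁻¹) (i - j)
        * qp q (-(rs * q ^ j * rt⁻¹)) (i - j) * qp q q (i - j) ≠ 0 ∧
      qp q (s * q ^ (i + j)) (i - j) * qp q q (i - j) ≠ 0) :
    ∀ i j : ℕ, j ≤ i →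
      (∑ k ∈ Finset.Icc j i, d i k * c k j) = if i = j then 1 else 0 := by
  intro i j hji
  rcases eq_or_lt_of_le hji with rfl | hlt
  · -- diagonal case
    rw [Finset.Icc_self, Finset.sum_singleton, if_pos rfl,
      hd j j le_rfl, hc j j le_rfl]
    simp [Nat.sub_self, qp_zero]
  · have hij : i ≠ j := by omega
    rw [if_neg hij]
    by_cases ht1 : t = 1
    · -- degenerate case t = 1: both matrices are the identity
      subst ht1
      apply Finset.sum_eq_zero
      intro k hk
      rw [Finset.mem_Icc] at hk
      rcases eq_or_lt_of_le hk.1 with heq | hjk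
      · rw [← heq, hd i j (by omega), qp_one_eq_zero (show 1 ≤ i - j by omega)]
        simp
      · rw [hc k j (by omega), inv_one, qp_one_eq_zero (show 1 ≤ k - j by omega)]
        simp
    · -- main case
      have ht1' : (1:ℂ) - t ≠ 0 := fun h => ht1 (by linear_combination -h)
      set a : ℂ := s * q ^ (2*j) * t⁻¹ with ha_def
      have hrt0 : rt ≠ 0 := fun h => ht (by rw [← hrt, h]; ring)
      have hat : a * t = s * q^(2*j) := by
        rw [ha_def]; field_simp
      -- nonvanishing facts delivered by `hden`
      have hA : ∀ k, 1 ≤ k → (1:ℂ) - q^k ≠ 0 := by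
        intro k hk
        obtain ⟨l, rfl⟩ : ∃ l, k = l + 1 := ⟨k-1, by omega⟩
        have h := (hden (j+(l+1)) j (by omega)).1
        rw [Nat.add_sub_cancel_left] at h
        have h4 : qp q q (l+1) ≠ 0 := by
          rcases mul_ne_zero_iff.1 h with ⟨-, h4⟩; exact h4
        have h5 := qp_factor_ne h4 (show l < l+1 by omega)
        rw [show (1:ℂ) - q^(l+1) = 1 - q*q^l by rw [pow_succ]; ring]
        exact h5
      have hB : ∀ k, 1 ≤ k → (1:ℂ) - a*t*q^k ≠ 0 := by
        intro k hk
        obtain ⟨l, rfl⟩ : ∃ l, k = l + 1 := ⟨k-1, by omega⟩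
        have h := (hden (j+(l+1)) j (by omega)).1
        rw [Nat.add_sub_cancel_left] at h
        have h1 : qp q (s*q^(2*j+1)) (l+1) ≠ 0 := by
          rcases mul_ne_zero_iff.1 h with ⟨h', -⟩
          rcases mul_ne_zero_iff.1 h' with ⟨h'', -⟩
          rcases mul_ne_zero_iff.1 h'' with ⟨h1, -⟩; exact h1
        have h5 := qp_factor_ne h1 (show l < l+1 by omega)
        intro h0; apply h5
        rw [← h0, hat]
        rw [pow_succ, pow_succ']
        ring
      -- `1 - a ≠ 0` from the merged `±` pair of length 1
      have hu2 : (rs*q^j*rt⁻¹)^2 = a := by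
        have h1 : (rs*q^j*rt⁻¹)^2 = rs^2 * (rt^2)⁻¹ * (q^j)^2 := by
          rw [← inv_pow]; ring
        rw [h1, hrs, hrt, ha_def, ← pow_mul, mul_comm j 2]; ring
      have hpairA : ∀ N, qp q (rs*q^j*rt⁻¹) N * qp q (-(rs*q^j*rt⁻¹)) N = qp (q^2) a N := by
        intro N; rw [qp_pair, hu2]
      have hq2a : ∀ N, qp (q^2) a N ≠ 0 := by
        intro N
        have h := (hden (j+N) j (by omega)).1
        rw [Nat.add_sub_cancel_left] at h
        rcases mul_ne_zero_iff.1 h with ⟨h', -⟩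
        rcases mul_ne_zero_iff.1 h' with ⟨h'', h3⟩
        rcases mul_ne_zero_iff.1 h'' with ⟨-, h2⟩
        rw [← hpairA N]
        exact mul_ne_zero h2 h3
      have ha1 : (1:ℂ) - a ≠ 0 := by
        have h := hq2a 1
        rw [qp, Finset.prod_range_one, pow_zero, mul_one] at h
        exact h
      -- reindex the sum
      set n : ℕ := i - j with hn_def
      have hn1 : 1 ≤ n := by omega
      have hi : i = j + n := by omega
      have hv2 : (rs*q^(j+1)*rt⁻¹)^2 = a*q^2 := by
        have h1 : (rs*q^(j+1)*rt⁻¹)^2 = rs^2 * (rt^2)⁻¹ * (q^(j+1))^2 := by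
          rw [← inv_pow]; ring
        rw [h1, hrs, hrt, ha_def, ← pow_mul, mul_comm (j+1) 2]
        rw [show 2*(j+1) = 2*j + 2 by omega, pow_add]; ring
      have hpairB : ∀ N, qp q (rs*q^(j+1)*rt⁻¹) N * qp q (-(rs*q^(j+1)*rt⁻¹)) N
          = qp (q^2) (a*q^2) N := by
        intro N; rw [qp_pair, hv2]
      have hterm : ∀ m, m ≤ n → d i (j+m) * c (j+m) j = Ff q a t n m := by
        intro m hm
        have hDd : qp q (s*q^(i+(j+m))) (n-m) * qp q q (n-m) ≠ 0 := by
          have h := (hden i (j+m) (by omega)).2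
          rw [show i - (j+m) = n - m by omega] at h
          exact h
        rcases mul_ne_zero_iff.1 hDd with ⟨hDd1, hDd2⟩
        have hDc : qp q (s*q^(2*j+1)) m * qp (q^2) a m * qp q q m ≠ 0 := by
          have h := (hden (j+m) j (by omega)).1
          rw [Nat.add_sub_cancel_left] at h
          rcases mul_ne_zero_iff.1 h with ⟨h', h4⟩
          rcases mul_ne_zero_iff.1 h' with ⟨h'', h3⟩
          rcases mul_ne_zero_iff.1 h'' with ⟨h1, h2⟩
          refine mul_ne_zero (mul_ne_zero h1 ?_) h4
          rw [← hpairA m]; exact mul_ne_zero h2 h3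
        rcases mul_ne_zero_iff.1 hDc with ⟨hDc', hDc3⟩
        rcases mul_ne_zero_iff.1 hDc' with ⟨hDc1, hDc2⟩
        rw [hd i (j+m) (by omega), hc (j+m) j (by omega)]
        rw [show i - (j+m) = n - m by omega, Nat.add_sub_cancel_left]
        rw [show (qp q (s * q ^ (2 * j) * t⁻¹) m
                * qp q (rs * q ^ (j + 1) * rt⁻¹) m
                * qp q (-(rs * q ^ (j + 1) * rt⁻¹)) m
                * qp q t⁻¹ m : ℂ)
            = (qp q (rs * q ^ (j+1) * rt⁻¹) m * qp q (-(rs * q ^ (j+1) * rt⁻¹)) m)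
              * (qp q (s * q ^ (2 * j) * t⁻¹) m * qp q t⁻¹ m) by ring]
        rw [show (qp q (s * q ^ (2*j+1)) m
                * qp q (rs * q ^ j * rt⁻¹) m
                * qp q (-(rs * q ^ j * rt⁻¹)) m
                * qp q q m : ℂ)
            = (qp q (rs * q ^ j * rt⁻¹) m * qp q (-(rs * q ^ j * rt⁻¹)) m)
              * (qp q (s * q ^ (2*j+1)) m * qp q q m) by ring]
        rw [hpairA m, hpairB m]
        rw [show (s * q ^ (i+(j+m)+1) * t⁻¹ : ℂ) = a*q^(n+m+1) by
          rw [ha_def, show i+(j+m)+1 = 2*j+(n+m+1) by omega, pow_add]; ring]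
        rw [show (s * q ^ (i+(j+m)) : ℂ) = a*t*q^(n+m) by
          rw [show i+(j+m) = 2*j+(n+m) by omega, pow_add, hat]; ring]
        rw [show (s * q ^ (2*j+1) : ℂ) = a*t*q by rw [pow_succ, hat]; ring]
        rw [show (s * q ^ (2*j) * t⁻¹ : ℂ) = a by rw [ha_def]]
        have hDd1' : qp q (a*t*q^(n+m)) (n-m) ≠ 0 := by
          rw [show (a*t*q^(n+m) : ℂ) = s*q^(i+(j+m)) by
            rw [hat, show i+(j+m) = 2*j+(n+m) by omega, pow_add]; ring]
          exact hDd1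
        have hDc1' : qp q (a*t*q) m ≠ 0 := by
          rw [show (a*t*q : ℂ) = s*q^(2*j+1) by rw [hat, pow_succ]; ring]
          exact hDc1
        have hq2am := hq2a m
        have e3 : (1-a) * qp (q^2) (a*q^2) m = qp (q^2) a m * (1 - a*q^(2*m)) := by
          rw [show (q^(2*m):ℂ) = (q^2)^m from pow_mul q 2 m, ← qp_succ (q^2) a m,
            qp_succ' (q^2) a m]
        have hcval : (qp (q^2) (a*q^2) m * (qp q a m * qp q t⁻¹ m))
              / (qp (q^2) a m * (qp q (a*t*q) m * qp q q m)) * t^m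
            = (qp q a m * qp q t⁻¹ m * (1 - a*q^(2*m)) * t^m)
              / (qp q (a*t*q) m * qp q q m * (1-a)) := by
          rw [div_mul_eq_mul_div, div_eq_div_iff
            (mul_ne_zero hq2am (mul_ne_zero hDc1' hDc3))
            (mul_ne_zero (mul_ne_zero hDc1' hDc3) ha1)]
          linear_combination (qp q a m * qp q t⁻¹ m * t^m * qp q (a*t*q) m * qp q q m) * e3
        rw [hcval]
        unfold Ff
        rw [div_mul_div_comm, div_eq_div_iff
          (by repeat' apply mul_ne_zero
              all_goals assumption)
          (by repeat' apply mul_ne_zero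
              all_goals assumption)]
        ring
      have hsum : ∑ k ∈ Finset.Icc j i, d i k * c k j
          = ∑ m ∈ Finset.range (n+1), d i (j+m) * c (j+m) j := by
        rw [← Finset.Ico_add_one_right_eq_Icc, Finset.sum_Ico_eq_sum_range,
          show i + 1 - j = n + 1 by omega]
      rw [hsum, Finset.sum_congr rfl (fun m hm =>
        hterm m (by have := Finset.mem_range.1 hm; omega))]
      exact sum_Ff q a t n hn1 hq ht ht1' ha1 hA hB
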